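/- Let G = H □_{F₁,…,F_t} K₂^{□t} and let (G,p,ℓ) be a point-hyperplane framework in ℝ^d with t-fold extrusion symmetry with extrusion directions τ₁,…,τ_t, with extrusion action θ: ℤ₂^t → Aut(G). Suppose there is no edge {i,j} ∈ E_PH for which the hyperplane corresponding to j contains an extrusion direction. Then the point-hyperplane rigidity matrix R(G,p,ℓ) is a ℤ₂^t-linear map of the external representation P′_V and the internal representation P′_E, i.e. R(G,p,ℓ)·P′_V(γ) = P′_E(γ)·R(G,p,ℓ) for all γ ∈ ℤ₂^t. -/

import Mathlib

/-!
STATEMENT 4: Let `G = H □_{F₁,…,F_t} K₂^{□t}` and let `(G,p,ℓ)` be a point-hyperplane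
framework in `ℝ^d` with `t`-fold extrusion symmetry with extrusion directions
`τ₁,…,τ_t`.  Suppose no edge of `E_PH` has its hyperplane endpoint containing an
extrusion direction.  Then the point-hyperplane rigidity matrix intertwines the
external representation `P′_V` and the internal representation `P′_E`:
`R(G,p,ℓ)·P′_V(γ) = P′_E(γ)·R(G,p,ℓ)` for all `γ ∈ ℤ₂^t`.  This is expressed
row-wise: applying `R` to `P′_V(γ) q` at a row equals the sign attached by `P′_E(γ)` to
that row times the value of `R q` at the `γ`-image of the row.
-/

open Matrix
open scoped Classical

/-- The group `ℤ₂^t`. -/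
abbrev Zkt (t : ℕ) := Fin t → ZMod 2

/-- Configuration space of a point-hyperplane framework in `ℝ^d`. -/
abbrev PHCfg (d : ℕ) (VP VH : Type*) := (VP → Fin d → ℝ) × (VH → (Fin d → ℝ) × ℝ)

/-- Point vertices of `G = H □_{F₁,…,F_t} K₂^{□t}`: pairs `(v, 𝐞)` with `v` a point
vertex of `H` and `𝐞 ∈ {0,1}^t`. -/
abbrev VPt (VPH : Type*) (t : ℕ) := VPH × Zkt t

/-- Hyperplane vertices of `G = H □_{F₁,…,F_t} K₂^{□t}`: pairs `(w, 𝐞)`, where the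
coordinates `h` of `𝐞` with `w ∈ F_h` are "starred" (immaterial: all notions below are
invariant under changing them, which models the contraction of such pairs). -/
abbrev VHt (VHH : Type*) (t : ℕ) := VHH × Zkt t

/-- The extrusion action on point vertices. -/
def thetaP {VPH : Type*} {t : ℕ} (γ : Zkt t) (i : VPt VPH t) : VPt VPH t := (i.1, i.2 + γ)

/-- The extrusion action on hyperplane vertices (`⋆ + 0 = ⋆ + 1 = ⋆` is modelled by
invariance under the starred coordinates). -/
def thetaH {VHH : Type*} {t : ℕ} (γ : Zkt t) (j : VHt VHH t) : VHt VHH t := (j.1, j.2 + γ)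

/-- Coefficient of `τ_h` in the extrusion direction induced by `γ` at level `e`:
`+1` if `e_h = 0, γ_h = 1`; `-1` if `e_h = 1, γ_h = 1`; `0` if `γ_h = 0`. -/
noncomputable def coef (e g : ZMod 2) : ℝ := (1 - 2 * (e.val : ℝ)) * ((g.val : ℝ))

/-- The extrusion direction `τ_γ(i)` of a point vertex `i` induced by `γ`. -/
noncomputable def tauP {VPH : Type*} {t d : ℕ} (τ : Fin t → Fin d → ℝ) (γ : Zkt t)
    (i : VPt VPH t) : Fin d → ℝ :=
  ∑ h, coef (i.2 h) (γ h) • τ h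

/-- The extrusion direction `τ_γ(j)` of a hyperplane vertex `j` induced by `γ`
(starred coordinates, i.e. those `h` with `j ∈ F_h`, contribute nothing). -/
noncomputable def tauH {VHH : Type*} {t d : ℕ} (F : Fin t → VHH → Prop)
    (τ : Fin t → Fin d → ℝ) (γ : Zkt t) (j : VHt VHH t) : Fin d → ℝ :=
  ∑ h, if F h j.1 then 0 else coef (j.2 h) (γ h) • τ h

/-- Definition 3.1: `t`-fold extrusion symmetry of a point-hyperplane framework on
`G = H □_{F₁,…,F_t} K₂^{□t}` with extrusion directions `τ₁,…,τ_t ∈ ℝ^d \ {0}`: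
(i) points are translated by the induced extrusion directions, (ii) hyperplane normals
are preserved, (iii) `τ_h` lies in the hyperplane of `(w,𝐞)` iff `w ∈ F_h`,
(iv) the offsets transform by `r_{θ(γ)j} = r_j + ⟨a_j, τ_γ(j)⟩`. -/
def PHExtrusion {VPH VHH : Type*} {t d : ℕ} (F : Fin t → VHH → Prop)
    (τ : Fin t → Fin d → ℝ) (c : PHCfg d (VPt VPH t) (VHt VHH t)) : Prop :=
  (∀ h, τ h ≠ 0) ∧
  (∀ (γ : Zkt t) (i : VPt VPH t), c.1 (thetaP γ i) = c.1 i + tauP τ γ i) ∧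
  (∀ (γ : Zkt t) (j : VHt VHH t), (c.2 (thetaH γ j)).1 = (c.2 j).1) ∧
  (∀ (j : VHt VHH t) (h : Fin t), τ h ⬝ᵥ (c.2 j).1 = 0 ↔ F h j.1) ∧
  (∀ (γ : Zkt t) (j : VHt VHH t),
    (c.2 (thetaH γ j)).2 = (c.2 j).2 + (c.2 j).1 ⬝ᵥ tauH F τ γ j)

/-- Point-point adjacency in `G`. -/
def AdjPP {VPH : Type*} {t : ℕ} (hPP : VPH → VPH → Prop) (i j : VPt VPH t) : Prop :=
  (hPP i.1 j.1 ∧ i.2 = j.2) ∨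
    (i.1 = j.1 ∧ ∃ h, i.2 h ≠ j.2 h ∧ ∀ h', h' ≠ h → i.2 h' = j.2 h')

/-- Point-hyperplane adjacency in `G`: the levels must agree on all non-starred
coordinates of the hyperplane vertex. -/
def AdjPH {VPH VHH : Type*} {t : ℕ} (F : Fin t → VHH → Prop)
    (hPH : VPH → VHH → Prop) (i : VPt VPH t) (j : VHt VHH t) : Prop :=
  hPH i.1 j.1 ∧ ∀ h, ¬ F h j.1 → i.2 h = j.2 h

/-- Hyperplane-hyperplane (non-parallel, i.e. angle-constraint) adjacency in `G`,
inherited from the edges of `H`: the levels must agree on coordinates that are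
non-starred for both endpoints. -/
def AdjHHn {VHH : Type*} {t : ℕ} (F : Fin t → VHH → Prop)
    (hHH : VHH → VHH → Prop) (j k : VHt VHH t) : Prop :=
  hHH j.1 k.1 ∧ ∀ h, ¬ F h j.1 → ¬ F h k.1 → j.2 h = k.2 h

/-- Hyperplane-hyperplane parallel adjacency in `G`: two copies of the same hyperplane
vertex of `H` whose levels differ in exactly one non-starred coordinate. -/
def AdjHHp {VHH : Type*} {t : ℕ} (F : Fin t → VHH → Prop) (j k : VHt VHH t) : Prop :=
  j.1 = k.1 ∧ ∃ h, ¬ F h j.1 ∧ j.2 h ≠ k.2 h ∧ ∀ h', h' ≠ h → j.2 h' = k.2 h'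

/-- The external representation `P′_V = (P_{V_P} ⊗ I_d) ⊕ P′_{V_H}` of `ℤ₂^t` acting on
the configuration space: point velocities are permuted, and for a hyperplane vertex `j`
the block `[[I_d, 0], [−τ_γ(j)ᵀ, 1]]` is applied to the permuted `(ȧ, ṙ)`. -/
noncomputable def extActP {VPH VHH : Type*} {t d : ℕ} (F : Fin t → VHH → Prop)
    (τ : Fin t → Fin d → ℝ) (γ : Zkt t) (q : PHCfg d (VPt VPH t) (VHt VHH t)) :
    PHCfg d (VPt VPH t) (VHt VHH t) :=
  (fun i => q.1 (thetaP γ i),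
   fun j => ((q.2 (thetaH γ j)).1,
     (q.2 (thetaH γ j)).2 - tauH F τ γ j ⬝ᵥ (q.2 (thetaH γ j)).1))

/-- The orientation sign of a level entry: `+1` for `0` and `-1` for `1`. -/
noncomputable def sgn (e : ZMod 2) : ℝ := 1 - 2 * (e.val : ℝ)

/-- Row indices of the point-hyperplane rigidity matrix of `G`:
point-point rows, point-hyperplane rows, hyperplane-hyperplane angle rows,
`d−1` rows per parallel-constraint edge, and one normalisation row per hyperplane
vertex. -/
abbrev PRow (VP VH : Type*) (d : ℕ) :=
  (VP × VP) ⊕ (VP × VH) ⊕ (VH × VH) ⊕ ((VH × VH) × Fin (d - 1)) ⊕ VH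

/-- The point-hyperplane rigidity matrix of the extrusion-symmetric framework, applied
to a candidate infinitesimal motion `q`.  The `d−1` rows of a parallel-constraint edge
`{j,k}` (in direction `h`, with vectors `alph j.1 h m` as in Section 3.2) carry `(α,0)`
in the columns of the endpoint whose `h`-th level entry is `0` and `(−α,0)` in the
columns of the other endpoint. -/
noncomputable def phRigX {VPH VHH : Type*} {t d : ℕ} (F : Fin t → VHH → Prop)
    (hPP : VPH → VPH → Prop) (hPH : VPH → VHH → Prop) (hHH : VHH → VHH → Prop)
    (alph : VHH → Fin t → Fin (d - 1) → Fin d → ℝ)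
    (c q : PHCfg d (VPt VPH t) (VHt VHH t)) :
    PRow (VPt VPH t) (VHt VHH t) d → ℝ
  | Sum.inl (i, j) =>
      if AdjPP hPP i j then (c.1 i - c.1 j) ⬝ᵥ (q.1 i - q.1 j) else 0
  | Sum.inr (Sum.inl (i, j)) =>
      if AdjPH F hPH i j then
        c.1 i ⬝ᵥ (q.2 j).1 + q.1 i ⬝ᵥ (c.2 j).1 - (q.2 j).2
      else 0
  | Sum.inr (Sum.inr (Sum.inl (j, k))) =>
      if AdjHHn F hHH j k then
        (c.2 j).1 ⬝ᵥ (q.2 k).1 + (q.2 j).1 ⬝ᵥ (c.2 k).1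
      else 0
  | Sum.inr (Sum.inr (Sum.inr (Sum.inl ((j, k), m)))) =>
      if AdjHHp F j k then
        ∑ h, (if ¬ F h j.1 ∧ j.2 h ≠ k.2 h then
            sgn (j.2 h) * (alph j.1 h m ⬝ᵥ (q.2 j).1)
              + sgn (k.2 h) * (alph j.1 h m ⬝ᵥ (q.2 k).1)
          else 0)
      else 0
  | Sum.inr (Sum.inr (Sum.inr (Sum.inr j))) => (c.2 j).1 ⬝ᵥ (q.2 j).1

/-- The sign of the internal representation attached to a pair of levels `e, e'`:
`-1` exactly when the two levels differ in a single coordinate `h` and `γ_h = 1`. -/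
noncomputable def intSign {t : ℕ} (γ : Zkt t) (e e' : Zkt t) : ℝ :=
  ∏ h, (-1 : ℝ) ^ ((e h + e' h).val * (γ h).val)

/-- The permutation of the rows induced by `γ` (acting on each vertex index). -/
def rowMap {VPH VHH : Type*} {t d : ℕ} (γ : Zkt t) :
    PRow (VPt VPH t) (VHt VHH t) d → PRow (VPt VPH t) (VHt VHH t) d
  | Sum.inl (i, j) => Sum.inl (thetaP γ i, thetaP γ j)
  | Sum.inr (Sum.inl (i, j)) => Sum.inr (Sum.inl (thetaP γ i, thetaH γ j))
  | Sum.inr (Sum.inr (Sum.inl (j, k))) =>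
      Sum.inr (Sum.inr (Sum.inl (thetaH γ j, thetaH γ k)))
  | Sum.inr (Sum.inr (Sum.inr (Sum.inl ((j, k), m)))) =>
      Sum.inr (Sum.inr (Sum.inr (Sum.inl ((thetaH γ j, thetaH γ k), m))))
  | Sum.inr (Sum.inr (Sum.inr (Sum.inr j))) =>
      Sum.inr (Sum.inr (Sum.inr (Sum.inr (thetaH γ j))))

/-- The sign of the internal representation
`P′_E = P′_{E_PP} ⊕ P_{E_PH} ⊕ P_{E_HH∦} ⊕ (P′_{E_HH∥} ⊗ I_{d−1}) ⊕ P_{V_H}` on each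
row: the signed edge permutation sign on point-point and parallel rows, `+1` on the
point-hyperplane, angle and normalisation rows. -/
noncomputable def rowSign {VPH VHH : Type*} {t d : ℕ} (γ : Zkt t) :
    PRow (VPt VPH t) (VHt VHH t) d → ℝ
  | Sum.inl (i, j) => intSign γ i.2 j.2
  | Sum.inr (Sum.inl _) => 1
  | Sum.inr (Sum.inr (Sum.inl _)) => 1
  | Sum.inr (Sum.inr (Sum.inr (Sum.inl ((j, k), _)))) => intSign γ j.2 k.2
  | Sum.inr (Sum.inr (Sum.inr (Sum.inr _))) => 1


/-! Translations of the points by the induced extrusion directions preserve the difference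
vector of an edge inside one copy of `H` and reverse that of a `K₂`-edge in a direction `h`
with `γ_h = 1`; the same sign appears on parallel rows. This is exactly the sign of the
internal representation. In a point-hyperplane row, the hypothesis that the hyperplane
contains no extrusion direction forces both endpoints to lie at the same level, so the
translation `τ_γ(i)` of the point cancels the `−τ_γ(j)` correction of the hyperplane offset
in the external representation. -/

lemma ite_eq_mul_ite_of_iff {α : Type*} [MulZeroClass α] {P Q : Prop} [Decidable P]
    [Decidable Q] {x y s : α} (hPQ : P ↔ Q) (h : P → x = s * y) :
    (if P then x else 0) = s * (if Q then y else 0) := by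
  by_cases hP : P
  · rw [if_pos hP, if_pos (hPQ.mp hP), h hP]
  · rw [if_neg hP, if_neg (mt hPQ.mpr hP), mul_zero]

lemma sgn_eq_neg_one_pow_mul_sgn_add (a g : ZMod 2) :
    sgn a = (-1 : ℝ) ^ g.val * sgn (a + g) := by
  obtain rfl | rfl : a = 0 ∨ a = 1 := by revert a; decide
  all_goals obtain rfl | rfl : g = 0 ∨ g = 1 := by revert g; decide
  all_goals
    simp only [sgn, add_zero, zero_add, show (1 + 1 : ZMod 2) = 0 from rfl, ZMod.val_zero,
      ZMod.val_one]
    norm_num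

lemma coef_one (e : ZMod 2) : coef e 1 = sgn e := by
  simp [coef, sgn, ZMod.val_one]

lemma coef_zero (e : ZMod 2) : coef e 0 = 0 := by
  simp [coef]

section Levels

variable {t : ℕ}

lemma eq_add_single_of_ne_of_eqOn {e e' : Zkt t} {h₀ : Fin t} (hne : e h₀ ≠ e' h₀)
    (heq : ∀ h, h ≠ h₀ → e h = e' h) : e' = e + Pi.single h₀ 1 := by
  funext h
  by_cases hh : h = h₀
  · subst hh
    simp only [Pi.add_apply, Pi.single_eq_same]
    exact (by decide : ∀ a b : ZMod 2, a ≠ b → b = a + 1) _ _ hne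
  · simp [Pi.single_eq_of_ne hh, heq h hh]

lemma intSign_self (γ e : Zkt t) : intSign γ e e = 1 :=
  Finset.prod_eq_one fun h _ => by simp [CharTwo.add_self_eq_zero]

lemma intSign_of_ne_of_eqOn (γ : Zkt t) {e e' : Zkt t} {h₀ : Fin t} (hne : e h₀ ≠ e' h₀)
    (heq : ∀ h, h ≠ h₀ → e h = e' h) : intSign γ e e' = (-1 : ℝ) ^ (γ h₀).val := by
  rw [intSign, Fintype.prod_eq_single h₀ fun h hh => by simp [heq h hh, CharTwo.add_self_eq_zero],
    eq_add_single_of_ne_of_eqOn hne heq]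
  simp [← add_assoc, CharTwo.add_self_eq_zero, ZMod.val_one]

end Levels

section Adjacency

variable {VPH VHH : Type*} {t : ℕ} (F : Fin t → VHH → Prop) (γ : Zkt t)

lemma adjPP_thetaP_iff (hPP : VPH → VPH → Prop) (i j : VPt VPH t) :
    AdjPP hPP (thetaP γ i) (thetaP γ j) ↔ AdjPP hPP i j := by
  simp only [AdjPP, thetaP, Pi.add_apply, add_left_inj, ne_eq]

lemma adjPH_theta_iff (hPH : VPH → VHH → Prop) (i : VPt VPH t) (j : VHt VHH t) :
    AdjPH F hPH (thetaP γ i) (thetaH γ j) ↔ AdjPH F hPH i j := by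
  simp only [AdjPH, thetaP, thetaH, Pi.add_apply, add_left_inj]

lemma adjHHn_thetaH_iff (hHH : VHH → VHH → Prop) (j k : VHt VHH t) :
    AdjHHn F hHH (thetaH γ j) (thetaH γ k) ↔ AdjHHn F hHH j k := by
  simp only [AdjHHn, thetaH, Pi.add_apply, add_left_inj]

lemma adjHHp_thetaH_iff (j k : VHt VHH t) :
    AdjHHp F (thetaH γ j) (thetaH γ k) ↔ AdjHHp F j k := by
  simp only [AdjHHp, thetaH, Pi.add_apply, add_left_inj, ne_eq]

end Adjacency

section Extrusion

variable {VPH VHH : Type*} {t d : ℕ} (τ : Fin t → Fin d → ℝ)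

lemma tauP_single (h₀ : Fin t) (i : VPt VPH t) :
    tauP τ (Pi.single h₀ 1) i = sgn (i.2 h₀) • τ h₀ := by
  rw [tauP, Fintype.sum_eq_single h₀ fun h hh => by simp [Pi.single_eq_of_ne hh, coef_zero]]
  simp [coef_one]

lemma tauH_eq_tauP (F : Fin t → VHH → Prop) (γ : Zkt t) {i : VPt VPH t} {j : VHt VHH t}
    (hF : ∀ h, ¬ F h j.1) (hlevel : i.2 = j.2) : tauH F τ γ j = tauP τ γ i := by
  simp only [tauH, tauP, hF, if_false, hlevel]

variable {c : PHCfg d (VPt VPH t) (VHt VHH t)}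

lemma sub_eq_of_ne_of_eqOn
    (hp : ∀ (γ : Zkt t) (i : VPt VPH t), c.1 (thetaP γ i) = c.1 i + tauP τ γ i)
    {i j : VPt VPH t} {h₀ : Fin t} (h₁ : i.1 = j.1)
    (hne : i.2 h₀ ≠ j.2 h₀) (heq : ∀ h, h ≠ h₀ → i.2 h = j.2 h) :
    c.1 i - c.1 j = -(sgn (i.2 h₀) • τ h₀) := by
  have hj : thetaP (Pi.single h₀ 1) i = j :=
    Prod.ext h₁ (eq_add_single_of_ne_of_eqOn hne heq).symm
  rw [← hj, hp, tauP_single]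
  abel

lemma sub_eq_intSign_smul_sub_thetaP
    (hp : ∀ (γ : Zkt t) (i : VPt VPH t), c.1 (thetaP γ i) = c.1 i + tauP τ γ i)
    (hPP : VPH → VPH → Prop) (γ : Zkt t) {i j : VPt VPH t} (hij : AdjPP hPP i j) :
    c.1 i - c.1 j = intSign γ i.2 j.2 • (c.1 (thetaP γ i) - c.1 (thetaP γ j)) := by
  rcases hij with ⟨-, hlevel⟩ | ⟨h₁, h₀, hne, heq⟩
  · have htau : tauP τ γ i = tauP τ γ j := by simp only [tauP, hlevel]
    rw [hp, hp, htau, hlevel, intSign_self, one_smul]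
    abel
  · have hne' : (thetaP γ i).2 h₀ ≠ (thetaP γ j).2 h₀ := by
      simpa [thetaP] using hne
    have heq' : ∀ h, h ≠ h₀ → (thetaP γ i).2 h = (thetaP γ j).2 h := by
      simpa [thetaP] using heq
    rw [sub_eq_of_ne_of_eqOn τ hp h₁ hne heq,
      sub_eq_of_ne_of_eqOn τ hp (i := thetaP γ i) (j := thetaP γ j) h₁ hne' heq',
      intSign_of_ne_of_eqOn γ hne heq, sgn_eq_neg_one_pow_mul_sgn_add _ (γ h₀)]
    simp [thetaP, mul_smul]

end Extrusion

section Rows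

variable {VPH VHH : Type*} {t d : ℕ} (F : Fin t → VHH → Prop) (τ : Fin t → Fin d → ℝ)
  (hPP : VPH → VPH → Prop) (hPH : VPH → VHH → Prop) (hHH : VHH → VHH → Prop)
  (alph : VHH → Fin t → Fin (d - 1) → Fin d → ℝ) {c : PHCfg d (VPt VPH t) (VHt VHH t)}
  (γ : Zkt t) (q : PHCfg d (VPt VPH t) (VHt VHH t))

lemma phRigX_extActP_ppRow
    (hp : ∀ (γ : Zkt t) (i : VPt VPH t), c.1 (thetaP γ i) = c.1 i + tauP τ γ i)
    (i j : VPt VPH t) :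
    phRigX F hPP hPH hHH alph c (extActP F τ γ q) (.inl (i, j))
      = intSign γ i.2 j.2 * phRigX F hPP hPH hHH alph c q (.inl (thetaP γ i, thetaP γ j)) := by
  simp only [phRigX, extActP]
  refine ite_eq_mul_ite_of_iff (adjPP_thetaP_iff γ hPP i j).symm fun hij => ?_
  rw [sub_eq_intSign_smul_sub_thetaP τ hp hPP γ hij, smul_dotProduct, smul_eq_mul]

lemma phRigX_extActP_phRow
    (hp : ∀ (γ : Zkt t) (i : VPt VPH t), c.1 (thetaP γ i) = c.1 i + tauP τ γ i)
    (ha : ∀ (γ : Zkt t) (j : VHt VHH t), (c.2 (thetaH γ j)).1 = (c.2 j).1)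
    {i : VPt VPH t} {j : VHt VHH t} (hnoPH : AdjPH F hPH i j → ∀ h, ¬ F h j.1) :
    phRigX F hPP hPH hHH alph c (extActP F τ γ q) (.inr (.inl (i, j)))
      = phRigX F hPP hPH hHH alph c q (.inr (.inl (thetaP γ i, thetaH γ j))) := by
  simp only [phRigX, extActP]
  refine ite_congr (propext (adjPH_theta_iff F γ hPH i j).symm) (fun hθ => ?_) fun _ => rfl
  have hij := (adjPH_theta_iff F γ hPH i j).mp hθ
  have hF := hnoPH hij
  have hlevel : i.2 = j.2 := funext fun h => hij.2 h (hF h)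
  rw [hp, ha, tauH_eq_tauP τ F γ hF hlevel, add_dotProduct]
  ring

lemma phRigX_extActP_angleRow
    (ha : ∀ (γ : Zkt t) (j : VHt VHH t), (c.2 (thetaH γ j)).1 = (c.2 j).1)
    (j k : VHt VHH t) :
    phRigX F hPP hPH hHH alph c (extActP F τ γ q) (.inr (.inr (.inl (j, k))))
      = phRigX F hPP hPH hHH alph c q (.inr (.inr (.inl (thetaH γ j, thetaH γ k)))) := by
  simp only [phRigX, extActP]
  exact ite_congr (propext (adjHHn_thetaH_iff F γ hHH j k).symm) (fun _ => by rw [ha, ha])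
    fun _ => rfl

lemma phRigX_extActP_parallelRow (j k : VHt VHH t) (m : Fin (d - 1)) :
    phRigX F hPP hPH hHH alph c (extActP F τ γ q) (.inr (.inr (.inr (.inl ((j, k), m)))))
      = intSign γ j.2 k.2 * phRigX F hPP hPH hHH alph c q
          (.inr (.inr (.inr (.inl ((thetaH γ j, thetaH γ k), m))))) := by
  simp only [phRigX, extActP]
  refine ite_eq_mul_ite_of_iff (adjHHp_thetaH_iff F γ j k).symm
    fun ⟨_, h₀, _, hne, heq⟩ => ?_
  rw [intSign_of_ne_of_eqOn γ hne heq, Finset.mul_sum]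
  refine Finset.sum_congr rfl fun h _ =>
    ite_eq_mul_ite_of_iff (by simp [thetaH]) fun ⟨_, hneh⟩ => ?_
  obtain rfl : h = h₀ := by_contra fun hh => hneh (heq h hh)
  rw [sgn_eq_neg_one_pow_mul_sgn_add (j.2 h) (γ h), sgn_eq_neg_one_pow_mul_sgn_add (k.2 h) (γ h)]
  simp only [thetaH, Pi.add_apply]
  ring

lemma phRigX_extActP_normRow
    (ha : ∀ (γ : Zkt t) (j : VHt VHH t), (c.2 (thetaH γ j)).1 = (c.2 j).1) (j : VHt VHH t) :
    phRigX F hPP hPH hHH alph c (extActP F τ γ q) (.inr (.inr (.inr (.inr j))))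
      = phRigX F hPP hPH hHH alph c q (.inr (.inr (.inr (.inr (thetaH γ j))))) := by
  simp only [phRigX, extActP, ha]

end Rows

theorem ph_rigidity_intertwines_general
    {VPH VHH : Type*} {t d : ℕ}
    (F : Fin t → VHH → Prop) (τ : Fin t → Fin d → ℝ)
    (hPP : VPH → VPH → Prop)
    (hPH : VPH → VHH → Prop)
    (hHH : VHH → VHH → Prop)
    (alph : VHH → Fin t → Fin (d - 1) → Fin d → ℝ)
    (c : PHCfg d (VPt VPH t) (VHt VHH t))
    (hext : PHExtrusion F τ c)
    (hnoPH : ∀ (i : VPt VPH t) (j : VHt VHH t), AdjPH F hPH i j → ∀ h, ¬ F h j.1) :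
    ∀ (γ : Zkt t) (q : PHCfg d (VPt VPH t) (VHt VHH t))
      (row : PRow (VPt VPH t) (VHt VHH t) d),
      phRigX F hPP hPH hHH alph c (extActP F τ γ q) row
        = rowSign γ row * phRigX F hPP hPH hHH alph c q (rowMap γ row) := by
  obtain ⟨-, hp, ha, -, -⟩ := hext
  intro γ q row
  rcases row with ⟨i, j⟩ | ⟨i, j⟩ | ⟨j, k⟩ | ⟨⟨j, k⟩, m⟩ | j
  · exact phRigX_extActP_ppRow F τ hPP hPH hHH alph γ q hp i j
  · exact (phRigX_extActP_phRow F τ hPP hPH hHH alph γ q hp ha (hnoPH i j)).trans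
      (one_mul _).symm
  · exact (phRigX_extActP_angleRow F τ hPP hPH hHH alph γ q ha j k).trans (one_mul _).symm
  · exact phRigX_extActP_parallelRow F τ hPP hPH hHH alph γ q j k m
  · exact (phRigX_extActP_normRow F τ hPP hPH hHH alph γ q ha j).trans (one_mul _).symm

/-- **Theorem 3.2**: the point-hyperplane rigidity matrix of a `t`-fold
extrusion-symmetric framework is a `ℤ₂^t`-linear map of the external representation
`P′_V` and the internal representation `P′_E`, provided no point-hyperplane edge
involves a hyperplane containing an extrusion direction. -/
theorem ph_rigidity_intertwines
    {VPH VHH : Type*} [Fintype VPH] [Fintype VHH] {t d : ℕ}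
    (F : Fin t → VHH → Prop) (τ : Fin t → Fin d → ℝ)
    (hPP : VPH → VPH → Prop) (hPPsymm : ∀ u v, hPP u v → hPP v u)
    (hPH : VPH → VHH → Prop)
    (hHH : VHH → VHH → Prop) (hHHsymm : ∀ u v, hHH u v → hHH v u)
    (alph : VHH → Fin t → Fin (d - 1) → Fin d → ℝ)
    (c : PHCfg d (VPt VPH t) (VHt VHH t))
    (hext : PHExtrusion F τ c)
    (hnoPH : ∀ (i : VPt VPH t) (j : VHt VHH t), AdjPH F hPH i j → ∀ h, ¬ F h j.1) :
    ∀ (γ : Zkt t) (q : PHCfg d (VPt VPH t) (VHt VHH t))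
      (row : PRow (VPt VPH t) (VHt VHH t) d),
      phRigX F hPP hPH hHH alph c (extActP F τ γ q) row
        = rowSign γ row * phRigX F hPP hPH hHH alph c q (rowMap γ row) :=
  ph_rigidity_intertwines_general F τ hPP hPH hHH alph c hext hnoPH
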